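/- arXiv:1012.5012 — 2 statements merged into one kernel-verified Lean document; each statement's English description precedes it below -/
import Mathlib

section
/- For any real numbers a > 0, b > 0, and any positive integer r, one has a²/(2r) + b·r ≥ √(2b)·a. Consequently, for a sequence y with y_i outside the ε-neighborhood of Θ for n ≤ i ≤ m (with n < m), the functional piece Σ_{i=n}^{m-1} (½|Δy_i|² + A(1-cos y_i)) is at least √(2Aα_ε) · |y_m - y_n|, where α_ε = min_{t ∉ B_ε(Θ)} (1 - cos t). -/
open Real

/-- `α_ε = min_{t ∉ B_ε(Θ)} (1 - cos t)` where `Θ = {2kπ : k ∈ ℤ}`. -/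
noncomputable def alphaEps (ε : ℝ) : ℝ :=
  sInf ((fun t => 1 - Real.cos t) '' {t : ℝ | ∀ k : ℤ, ε ≤ |t - 2 * k * π|})

/-!
Both parts are AM-GM. For the first, `a²/(2r) + br - √(2b)a = (a - √(2b)r)²/(2r)`. For the
second, each step satisfies `½|Δyᵢ|² + A(1 - cos yᵢ) ≥ ½|Δyᵢ|² + Aα_ε ≥ √(2Aα_ε)|Δyᵢ|`,
and summing the steps bounds `|y_m - y_n|` by the triangle inequality.
-/

theorem sqrt_two_mul_mul_le_sq_div_add {b r : ℝ} (hb : 0 ≤ b) (hr : 0 < r) (a : ℝ) :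
    √(2 * b) * a ≤ a ^ 2 / (2 * r) + b * r := by
  have hs : √(2 * b) ^ 2 = 2 * b := sq_sqrt (by positivity)
  rw [div_add' _ _ _ (by positivity), le_div_iff₀ (by positivity), ← sub_nonneg]
  have hsq : a ^ 2 + b * r * (2 * r) - √(2 * b) * a * (2 * r) = (a - √(2 * b) * r) ^ 2 := by
    linear_combination (-r ^ 2) * hs
  exact hsq ▸ sq_nonneg _

theorem sqrt_two_mul_mul_abs_le {c : ℝ} (hc : 0 ≤ c) (a : ℝ) :
    √(2 * c) * |a| ≤ 1 / 2 * a ^ 2 + c := by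
  simpa [sq_abs, div_eq_inv_mul] using sqrt_two_mul_mul_le_sq_div_add hc one_pos |a|

theorem Int.sum_Ico_sub {M : Type*} [AddCommGroup M] (f : ℤ → M) {n m : ℤ} (hnm : n ≤ m) :
    ∑ i ∈ Finset.Ico n m, (f (i + 1) - f i) = f m - f n := by
  induction m, hnm using Int.leInduction with
  | base => simp
  | succ m hm ih =>
    rw [Finset.Ico_add_one_right_eq_Icc, ← Finset.Ico_insert_right hm,
      Finset.sum_insert Finset.right_notMem_Ico, ih]
    abel

theorem abs_sub_le_sum_Ico_abs_sub (y : ℤ → ℝ) {n m : ℤ} (hnm : n ≤ m) :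
    |y m - y n| ≤ ∑ i ∈ Finset.Ico n m, |y (i + 1) - y i| := by
  rw [← Int.sum_Ico_sub y hnm]
  exact Finset.abs_sum_le_sum_abs _ _

theorem sqrt_two_mul_abs_sub_le_sum_action (y V : ℤ → ℝ) {n m : ℤ} (hnm : n ≤ m) {c : ℝ}
    (hc : 0 ≤ c) (hV : ∀ i ∈ Finset.Ico n m, c ≤ V i) :
    √(2 * c) * |y m - y n| ≤ ∑ i ∈ Finset.Ico n m, (1 / 2 * (y (i + 1) - y i) ^ 2 + V i) :=
  calc √(2 * c) * |y m - y n|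
      ≤ √(2 * c) * ∑ i ∈ Finset.Ico n m, |y (i + 1) - y i| :=
        mul_le_mul_of_nonneg_left (abs_sub_le_sum_Ico_abs_sub y hnm) (sqrt_nonneg _)
    _ = ∑ i ∈ Finset.Ico n m, √(2 * c) * |y (i + 1) - y i| := Finset.mul_sum _ _ _
    _ ≤ ∑ i ∈ Finset.Ico n m, (1 / 2 * (y (i + 1) - y i) ^ 2 + V i) :=
        Finset.sum_le_sum fun i hi =>
          (sqrt_two_mul_mul_abs_le hc _).trans (add_le_add_right (hV i hi) _)

theorem alphaEps_nonneg (ε : ℝ) : 0 ≤ alphaEps ε :=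
  Real.sInf_nonneg <| by
    rintro _ ⟨t, -, rfl⟩
    linarith [cos_le_one t]

theorem alphaEps_le_one_sub_cos {ε t : ℝ} (ht : ∀ k : ℤ, ε ≤ |t - 2 * k * π|) :
    alphaEps ε ≤ 1 - cos t := by
  refine csInf_le ⟨0, ?_⟩ ⟨t, ht, rfl⟩
  rintro _ ⟨s, -, rfl⟩
  linarith [cos_le_one s]

theorem lower_bound_outside_neighborhood_general (A ε : ℝ) (hA : 0 < A) :
    (∀ a b : ℝ, 0 < a → 0 < b → ∀ r : ℕ, 0 < r →
      Real.sqrt (2 * b) * a ≤ a ^ 2 / (2 * (r : ℝ)) + b * r) ∧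
    (∀ (y : ℤ → ℝ) (n m : ℤ), n < m →
      (∀ i : ℤ, n ≤ i → i ≤ m → ∀ k : ℤ, ε ≤ |y i - 2 * k * π|) →
      Real.sqrt (2 * A * alphaEps ε) * |y m - y n| ≤
        ∑ i ∈ Finset.Ico n m,
          ((1 / 2) * (y (i + 1) - y i) ^ 2 + A * (1 - Real.cos (y i)))) := by
  refine ⟨fun a b _ hb r hr => sqrt_two_mul_mul_le_sq_div_add hb.le (Nat.cast_pos.2 hr) a, ?_⟩
  intro y n m hnm hy
  rw [mul_assoc]
  refine sqrt_two_mul_abs_sub_le_sum_action y _ hnm.le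
    (mul_nonneg hA.le (alphaEps_nonneg ε)) fun i hi => ?_
  rw [Finset.mem_Ico] at hi
  exact mul_le_mul_of_nonneg_left (alphaEps_le_one_sub_cos (hy i hi.1 hi.2.le)) hA.le

/-- For `a, b > 0` and a positive integer `r`, `a²/(2r) + b r ≥ √(2b) a`;
consequently, if `y_i ∉ B_ε(Θ)` for `n ≤ i ≤ m`, then
`Σ_{i=n}^{m-1} (½|Δy_i|² + A(1 - cos y_i)) ≥ √(2Aα_ε)|y_m - y_n|`. -/
theorem lower_bound_outside_neighborhood (A ε : ℝ) (hA : 0 < A)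
    (hε : 0 < ε) (hε' : ε < 2 * π / 3) :
    (∀ a b : ℝ, 0 < a → 0 < b → ∀ r : ℕ, 0 < r →
      Real.sqrt (2 * b) * a ≤ a ^ 2 / (2 * (r : ℝ)) + b * r) ∧
    (∀ (y : ℤ → ℝ) (n m : ℤ), n < m →
      (∀ i : ℤ, n ≤ i → i ≤ m → ∀ k : ℤ, ε ≤ |y i - 2 * k * π|) →
      Real.sqrt (2 * A * alphaEps ε) * |y m - y n| ≤
        ∑ i ∈ Finset.Ico n m,
          ((1 / 2) * (y (i + 1) - y i) ^ 2 + A * (1 - Real.cos (y i)))) :=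
  lower_bound_outside_neighborhood_general A ε hA
end

section
/- For A > 0, if y is a solution of Δ²y_{n-1} = A sin(y_n) with finite action J(y) < ∞, then Δy_n → 0 as n → ±∞ and sin(y_{±∞}) = 0 where y_{±∞} are the limits of y_n (which exist and lie in Θ ⊂ {kπ : k ∈ ℤ}). -/
/-!
Finite action makes both `½ (Δy_n)²` and `1 - cos y_n` summable, so along the cofinite filter
`Δy_n → 0` and `cos y_n → 1`. Writing `y_n = 2π k_n + g_n` with `k_n` the nearest integer to
`y_n / 2π`, the second fact gives `g_n → 0`; then `2π (k_{n+1} - k_n) = Δy_n - Δg_n → 0`, so the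
integers `k_n` are eventually constant and `y_n` converges to a point of `2πℤ`.
-/

open Real Filter Topology

section

variable {ι : Type*} {l : Filter ι}

lemma tendsto_zero_of_tendsto_sq {f : ι → ℝ} (h : Tendsto (fun i => f i ^ 2) l (𝓝 0)) :
    Tendsto f l (𝓝 0) := by
  rw [tendsto_zero_iff_abs_tendsto_zero]
  simpa [Function.comp_def, sqrt_sq_eq_abs] using (continuous_sqrt.tendsto 0).comp h

lemma tendsto_zero_of_tendsto_cos {g : ι → ℝ} (hg : ∀ i, |g i| ≤ π)
    (h : Tendsto (fun i => cos (g i)) l (𝓝 1)) : Tendsto g l (𝓝 0) := by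
  rw [tendsto_zero_iff_abs_tendsto_zero]
  have harccos := (continuous_arccos.tendsto 1).comp h
  rw [arccos_one] at harccos
  refine harccos.congr fun i => ?_
  simp only [Function.comp_apply]
  rw [← cos_abs, arccos_cos (abs_nonneg _) (hg i)]

lemma Int.eventually_eq_zero_of_tendsto_cast {d : ι → ℤ}
    (h : Tendsto (fun i => (d i : ℝ)) l (𝓝 0)) : ∀ᶠ i in l, d i = 0 := by
  have hd : Tendsto d l (𝓝 0) := Int.isClosedEmbedding_coe_real.isEmbedding.tendsto_nhds_iff.2
    (by simpa [Function.comp_def] using h)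
  rwa [nhds_discrete, tendsto_pure] at hd

lemma tendsto_cofinite_of_summable_half_sq_add_mul_one_sub_cos {A : ℝ} (hA : 0 < A)
    {d θ : ι → ℝ} (h : Summable fun i => 1 / 2 * d i ^ 2 + A * (1 - cos (θ i))) :
    Tendsto d cofinite (𝓝 0) ∧ Tendsto (fun i => cos (θ i)) cofinite (𝓝 1) := by
  have hcos_nonneg : ∀ i, 0 ≤ 1 - cos (θ i) := fun i => sub_nonneg.2 (cos_le_one _)
  have hsq : Summable fun i => d i ^ 2 :=
    (h.mul_left 2).of_nonneg_of_le (fun i => sq_nonneg _)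
      fun i => by nlinarith [mul_nonneg hA.le (hcos_nonneg i)]
  have hcos : Summable fun i => 1 - cos (θ i) :=
    (h.mul_left A⁻¹).of_nonneg_of_le hcos_nonneg fun i => by
      rw [mul_add, ← mul_assoc A⁻¹ A, inv_mul_cancel₀ hA.ne', one_mul, le_add_iff_nonneg_left]
      positivity
  refine ⟨tendsto_zero_of_tendsto_sq hsq.tendsto_cofinite_zero, ?_⟩
  simpa using (tendsto_const_nhds (x := (1 : ℝ))).sub hcos.tendsto_cofinite_zero

end

lemma abs_sub_round_div_two_pi_mul_le (t : ℝ) : |t - round (t / (2 * π)) * (2 * π)| ≤ π := by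
  have h2π : 0 < 2 * π := by positivity
  calc |t - round (t / (2 * π)) * (2 * π)|
      = |t / (2 * π) - round (t / (2 * π))| * (2 * π) := by
        rw [← abs_of_pos h2π, ← abs_mul, abs_of_pos h2π, sub_mul, div_mul_cancel₀ _ h2π.ne']
    _ ≤ 1 / 2 * (2 * π) := by gcongr; exact abs_sub_round _
    _ = π := by ring

lemma sin_two_mul_int_mul_pi (k : ℤ) : sin (2 * k * π) = 0 := by
  simpa using sin_int_mul_pi (2 * k)

lemma Int.exists_eventually_eq_of_eventually_succ_eq {α : Type*} {k : ℤ → α}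
    (h : ∀ᶠ n in atTop, k (n + 1) = k n) : ∃ m, ∀ᶠ n in atTop, k n = m := by
  obtain ⟨N, hN⟩ := eventually_atTop.1 h
  refine ⟨k N, eventually_atTop.2 ⟨N, fun n hn => ?_⟩⟩
  induction n, hn using Int.leInduction with
  | base => rfl
  | succ n hn ih => rw [hN n hn, ih]

theorem exists_tendsto_atTop_two_mul_int_mul_pi {x : ℤ → ℝ}
    (hcos : Tendsto (fun n => cos (x n)) atTop (𝓝 1))
    (hstep : Tendsto (fun n => x (n + 1) - x n) atTop (𝓝 0)) :
    ∃ m : ℤ, Tendsto x atTop (𝓝 (2 * m * π)) := by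
  set k : ℤ → ℤ := fun n => round (x n / (2 * π))
  set g : ℤ → ℝ := fun n => x n - k n * (2 * π)
  have hg : Tendsto g atTop (𝓝 0) :=
    tendsto_zero_of_tendsto_cos (fun n => abs_sub_round_div_two_pi_mul_le (x n))
      (by simpa only [g, cos_sub_int_mul_two_pi] using hcos)
  have hk_step : Tendsto (fun n => ((k (n + 1) - k n : ℤ) : ℝ)) atTop (𝓝 0) := by
    have hg_step : Tendsto (fun n => g (n + 1)) atTop (𝓝 0) :=
      hg.comp (tendsto_atTop_add_const_right atTop 1 tendsto_id)
    have := (hstep.sub (hg_step.sub hg)).div_const (2 * π)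
    rw [sub_self, sub_zero, zero_div] at this
    refine this.congr fun n => ?_
    simp only [g]
    field_simp
    push_cast
    ring
  obtain ⟨m, hm⟩ := Int.exists_eventually_eq_of_eventually_succ_eq
    ((Int.eventually_eq_zero_of_tendsto_cast hk_step).mono fun n hn => sub_eq_zero.1 hn)
  refine ⟨m, ?_⟩
  have hlim := (tendsto_const_nhds (x := 2 * (m : ℝ) * π)).add hg
  rw [add_zero] at hlim
  refine hlim.congr' (hm.mono fun n hn => ?_)
  simp only [g, hn]
  ring

theorem exists_tendsto_atBot_two_mul_int_mul_pi {x : ℤ → ℝ}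
    (hcos : Tendsto (fun n => cos (x n)) atBot (𝓝 1))
    (hstep : Tendsto (fun n => x (n + 1) - x n) atBot (𝓝 0)) :
    ∃ m : ℤ, Tendsto x atBot (𝓝 (2 * m * π)) := by
  have hneg_pred : Tendsto (fun n : ℤ => -n - 1) atTop atBot :=
    tendsto_atBot_add_const_right _ (-1) tendsto_neg_atTop_atBot
  obtain ⟨m, hm⟩ := exists_tendsto_atTop_two_mul_int_mul_pi (x := fun n => x (-n))
    (hcos.comp tendsto_neg_atTop_atBot)
    (by simpa [sub_eq_add_neg, add_comm] using (hstep.comp hneg_pred).neg)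
  exact ⟨m, (hm.comp tendsto_neg_atBot_atTop).congr fun n => by simp⟩

theorem finite_action_solution_limits_general (A : ℝ) (hA : 0 < A) (y : ℤ → ℝ)
    (hJ : Summable (fun n : ℤ =>
      (1 / 2) * (y (n + 1) - y n) ^ 2 + A * (1 - Real.cos (y n)))) :
    Tendsto (fun n : ℤ => y (n + 1) - y n) atTop (nhds 0) ∧
    Tendsto (fun n : ℤ => y (n + 1) - y n) atBot (nhds 0) ∧
    (∃ Lp : ℝ, Tendsto y atTop (nhds Lp) ∧ (∃ k : ℤ, Lp = 2 * k * π) ∧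
      Real.sin Lp = 0) ∧
    (∃ Lm : ℝ, Tendsto y atBot (nhds Lm) ∧ (∃ k : ℤ, Lm = 2 * k * π) ∧
      Real.sin Lm = 0) := by
  obtain ⟨hstep, hcos⟩ := tendsto_cofinite_of_summable_half_sq_add_mul_one_sub_cos hA hJ
  have hTop : (atTop : Filter ℤ) ≤ cofinite := Int.cofinite_eq ▸ le_sup_right
  have hBot : (atBot : Filter ℤ) ≤ cofinite := Int.cofinite_eq ▸ le_sup_left
  obtain ⟨p, hp⟩ :=
    exists_tendsto_atTop_two_mul_int_mul_pi (hcos.mono_left hTop) (hstep.mono_left hTop)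
  obtain ⟨m, hm⟩ :=
    exists_tendsto_atBot_two_mul_int_mul_pi (hcos.mono_left hBot) (hstep.mono_left hBot)
  exact ⟨hstep.mono_left hTop, hstep.mono_left hBot,
    ⟨_, hp, ⟨p, rfl⟩, sin_two_mul_int_mul_pi p⟩, ⟨_, hm, ⟨m, rfl⟩, sin_two_mul_int_mul_pi m⟩⟩

/-- For a solution of `Δ²y_{n-1} = A sin y_n` with finite action
`J(y) = Σ[½|Δy_n|² + A(1-cos y_n)] < ∞`, the differences `Δy_n → 0` as
`n → ±∞`, the limits `y_{±∞}` exist, lie in `Θ = {2kπ : k ∈ ℤ}`, and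
satisfy `sin(y_{±∞}) = 0`. -/
theorem finite_action_solution_limits (A : ℝ) (hA : 0 < A) (y : ℤ → ℝ)
    (hsol : ∀ n : ℤ, y (n + 1) - 2 * y n + y (n - 1) = A * Real.sin (y n))
    (hJ : Summable (fun n : ℤ =>
      (1 / 2) * (y (n + 1) - y n) ^ 2 + A * (1 - Real.cos (y n)))) :
    Tendsto (fun n : ℤ => y (n + 1) - y n) atTop (nhds 0) ∧
    Tendsto (fun n : ℤ => y (n + 1) - y n) atBot (nhds 0) ∧
    (∃ Lp : ℝ, Tendsto y atTop (nhds Lp) ∧ (∃ k : ℤ, Lp = 2 * k * π) ∧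
      Real.sin Lp = 0) ∧
    (∃ Lm : ℝ, Tendsto y atBot (nhds Lm) ∧ (∃ k : ℤ, Lm = 2 * k * π) ∧
      Real.sin Lm = 0) :=
  finite_action_solution_limits_general A hA y hJ
end
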